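/- arXiv:1702.03101 — 3 statements merged into one kernel-verified Lean document; each statement's English description precedes it below -/
import Mathlib

section
/- For any BAN F: B^n → B^n and any block-sequential update schedule W, κ(F,W) = ⌈log₂(χ(G_NECC(F,W)))⌉. -/
/-- A configuration of a Boolean automata network of size `n`. -/
abbrev Conf (n : ℕ) := Fin n → Bool

/-- `F_I`: update simultaneously exactly the automata in `I`. -/
def updSet {n : ℕ} (F : Conf n → Conf n) (I : Finset (Fin n)) (x : Conf n) : Conf n :=
  fun i => if i ∈ I then F x i else x i

/-- `W_{<j}`: union of the first `j` blocks of the schedule `W`. -/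
def prefUnion {n : ℕ} (W : List (Finset (Fin n))) (j : ℕ) : Finset (Fin n) :=
  (W.take j).foldr (· ∪ ·) ∅

/-- `W` is a block-sequential update schedule: an ordered partition of the automata. -/
def isSchedule {n : ℕ} (W : List (Finset (Fin n))) : Prop :=
  (∀ B ∈ W, B.Nonempty) ∧ W.Pairwise Disjoint ∧ W.foldr (· ∪ ·) ∅ = Finset.univ

/-- Confusable configurations: identical after updating the first `i` blocks, some `i ∈ [0,p]`. -/
def confusable {n : ℕ} (F : Conf n → Conf n) (W : List (Finset (Fin n))) (x x' : Conf n) : Prop :=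
  ∃ i ≤ W.length, updSet F (prefUnion W i) x = updSet F (prefUnion W i) x'

/-- `CC(x,x')`: the set of steps making `x` and `x'` confusable. -/
def CCset {n : ℕ} (F : Conf n → Conf n) (W : List (Finset (Fin n))) (x x' : Conf n) : Set ℕ :=
  {i | i ≤ W.length ∧ updSet F (prefUnion W i) x = updSet F (prefUnion W i) x'}

/-- The `G_NECC` graph: edges between non-equivalent confusable configurations. -/
def gnecc {n : ℕ} (F : Conf n → Conf n) (W : List (Finset (Fin n))) :
    SimpleGraph (Conf n) where
  Adj x x' := F x ≠ F x' ∧ confusable F W x x'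
  symm := by
    constructor
    rintro x x' ⟨hne, i, hi, h⟩
    exact ⟨hne.symm, i, hi, h.symm⟩
  loopless := by constructor; rintro x ⟨hne, _⟩; exact hne rfl

/-- `F^W`: apply the blocks of `W` sequentially. -/
def runSched {n : ℕ} (F : Conf n → Conf n) (W : List (Finset (Fin n))) (x : Conf n) : Conf n :=
  W.foldl (fun y B => updSet F B y) x

/-- `W(i)`: the index of the block of `W` containing `i`. -/
def stepOf {n : ℕ} (W : List (Finset (Fin n))) (i : Fin n) : ℕ :=
  W.findIdx (fun B => decide (i ∈ B))

/-- `W' ∈ E_h(W,V')`: `W'` extends `W`, preserving the update order via `h`. -/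
def extendsSched {n m : ℕ} (W : List (Finset (Fin n))) (W' : List (Finset (Fin m)))
    (h : Fin n → Fin m) : Prop :=
  ∀ i i' : Fin n, (stepOf W i ≤ stepOf W i' ↔ stepOf W' (h i) ≤ stepOf W' (h i'))

/-- `(F',W')` `h`-simulates `(F,[V])`: `φ_h ∘ F'^{W'} = F ∘ φ_h`. -/
def simulates {n m : ℕ} (F' : Conf m → Conf m) (W' : List (Finset (Fin m)))
    (F : Conf n → Conf n) (h : Fin n → Fin m) : Prop :=
  ∀ z : Conf m, (fun i => runSched F' W' z (h i)) = F (fun i => z (h i))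

/-- `κ(F,W)`: minimal number of additional automata needed to simulate `(F,[V])`
with a schedule extending `W` order-preservingly. -/
noncomputable def kappa {n : ℕ} (F : Conf n → Conf n) (W : List (Finset (Fin n))) : ℕ :=
  sInf {k | ∃ h : Fin n → Fin (n + k), Function.Injective h ∧
    ∃ W' : List (Finset (Fin (n + k))), isSchedule W' ∧ extendsSched W W' h ∧
      ∃ F' : Conf (n + k) → Conf (n + k), simulates F' W' F h}

/-- The simple sequential update schedule `({0},{1},…,{n-1})`. -/
def seqSched (n : ℕ) : List (Finset (Fin n)) := (List.finRange n).map (fun i => {i})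

/-! A simulation with `k` extra automata yields a `2 ^ k`-colouring of `G_NECC`: colour `x` by the
final states of the extra automata, started from `x` padded with `false`. Two confusable
configurations of the same colour give runs that agree after the blocks of `W'` holding the
automata updated before the confusion (order preservation makes this a prefix of `W'`), hence the
same image. Conversely, given a colouring by `Conf k`, the extra automata first store the colour of
`x`; each original automaton, when updated, picks any configuration of that colour consistent
with the current state, which is confusable with `x` and therefore has the same image. -/

lemma mem_foldr_union {α : Type*} [DecidableEq α] {l : List (Finset α)} {a : α} :
    a ∈ l.foldr (· ∪ ·) ∅ ↔ ∃ B ∈ l, a ∈ B := by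
  induction l with
  | nil => simp
  | cons B l ih => simp [ih]

lemma exists_lt_iff_lt_of_le_iff_le {α : Type*} [Fintype α] {f g : α → ℕ}
    (hfg : ∀ a b, f a ≤ f b ↔ g a ≤ g b) (i : ℕ) : ∃ t, ∀ a, f a < i ↔ g a < t := by
  classical
  refine ⟨(Finset.univ.filter (f · < i)).sup (g · + 1), fun a =>
    ⟨fun ha => ?_, fun ha => ?_⟩⟩
  · exact Finset.le_sup (f := (g · + 1)) (Finset.mem_filter.2 ⟨Finset.mem_univ a, ha⟩)
  · contrapose! ha
    refine Finset.sup_le fun b hb => ?_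
    have hba : f b < f a := (Finset.mem_filter.1 hb).2.trans_le ha
    exact not_le.1 (mt (hfg a b).2 hba.not_ge)

section Schedule

variable {n : ℕ} {W : List (Finset (Fin n))}

lemma stepOf_lt_length (hW : isSchedule W) (i : Fin n) : stepOf W i < W.length := by
  obtain ⟨B, hB, hi⟩ := mem_foldr_union.1 (hW.2.2 ▸ Finset.mem_univ i)
  exact List.findIdx_lt_length_of_exists ⟨B, hB, decide_eq_true hi⟩

lemma mem_getElem_stepOf (hW : isSchedule W) (i : Fin n) :
    i ∈ W[stepOf W i]'(stepOf_lt_length hW i) :=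
  of_decide_eq_true (List.findIdx_getElem (p := fun B => decide (i ∈ B)))

lemma stepOf_eq_iff_mem (hW : isSchedule W) {i : Fin n} {s : ℕ} (hs : s < W.length) :
    stepOf W i = s ↔ i ∈ W[s] := by
  refine ⟨fun h => h ▸ mem_getElem_stepOf hW i, fun hi => ?_⟩
  have hle : stepOf W i ≤ s := by
    by_contra! hlt
    exact absurd hi (of_decide_eq_false (List.not_of_lt_findIdx hlt))
  refine hle.eq_of_not_lt fun hlt => ?_
  have hdisj := List.pairwise_iff_getElem.1 hW.2.1 _ _ (hlt.trans hs) hs hlt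
  exact Finset.disjoint_left.1 hdisj (mem_getElem_stepOf hW i) hi

lemma mem_prefUnion_iff (hW : isSchedule W) {i : Fin n} {t : ℕ} :
    i ∈ prefUnion W t ↔ stepOf W i < t := by
  simp only [prefUnion, mem_foldr_union, List.mem_take_iff_getElem, lt_min_iff]
  constructor
  · rintro ⟨_, ⟨s, ⟨hst, hs⟩, rfl⟩, hi⟩
    exact (stepOf_eq_iff_mem hW hs).2 hi ▸ hst
  · exact fun ht => ⟨_, ⟨_, ⟨ht, stepOf_lt_length hW i⟩, rfl⟩, mem_getElem_stepOf hW i⟩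

lemma updSet_prefUnion_apply (hW : isSchedule W) (F : Conf n → Conf n) (t : ℕ) (x : Conf n)
    (i : Fin n) : updSet F (prefUnion W t) x i = if stepOf W i < t then F x i else x i := by
  simp only [updSet, mem_prefUnion_iff hW]

end Schedule

section Run

variable {n : ℕ} {F : Conf n → Conf n} {W : List (Finset (Fin n))}

def runPart (F : Conf n → Conf n) (W : List (Finset (Fin n))) (t : ℕ) (z : Conf n) : Conf n :=
  runSched F (W.take t) z

lemma runPart_succ (F : Conf n → Conf n) {t : ℕ} (ht : t < W.length) (z : Conf n) :
    runPart F W (t + 1) z = updSet F W[t] (runPart F W t z) := by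
  rw [runPart, runPart, runSched, runSched, List.take_add_one, List.getElem?_eq_getElem ht,
    Option.toList_some, List.foldl_append]
  rfl

lemma runPart_apply (hW : isSchedule W) (t : ℕ) (z : Conf n) (i : Fin n) :
    runPart F W t z i = if stepOf W i < t then F (runPart F W (stepOf W i) z) i else z i := by
  induction t with
  | zero => rfl
  | succ t ih =>
    by_cases ht : t < W.length
    · rw [runPart_succ F ht, updSet]
      by_cases hi : i ∈ W[t]
      · rw [if_pos hi, (stepOf_eq_iff_mem hW ht).2 hi, if_pos t.lt_succ_self]
      · have hne : stepOf W i ≠ t := mt (stepOf_eq_iff_mem hW ht).1 hi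
        rw [if_neg hi, ih]
        simp only [Nat.lt_succ_iff_lt_or_eq, hne, or_false]
    · have hlen := stepOf_lt_length hW i
      have hstop : runPart F W (t + 1) z = runPart F W t z := by
        rw [runPart, runPart, List.take_of_length_le (by omega), List.take_of_length_le (by omega)]
      rw [hstop, ih, if_pos (by omega), if_pos (by omega)]

lemma runSched_apply (hW : isSchedule W) (z : Conf n) (i : Fin n) :
    runSched F W z i = F (runPart F W (stepOf W i) z) i := by
  have hfull : runSched F W z = runPart F W W.length z := by rw [runPart, List.take_length]
  rw [hfull, runPart_apply hW, if_pos (stepOf_lt_length hW i)]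

lemma runPart_apply_eq_ite (hW : isSchedule W) (t : ℕ) (z : Conf n) (i : Fin n) :
    runPart F W t z i = if stepOf W i < t then runSched F W z i else z i := by
  rw [runPart_apply hW, runSched_apply hW]

lemma runSched_eq_of_runPart_eq {z z' : Conf n} (t : ℕ) (h : runPart F W t z = runPart F W t z') :
    runSched F W z = runSched F W z' := by
  rw [runSched, runSched, ← List.take_append_drop t W, List.foldl_append, List.foldl_append]
  exact congrArg (List.foldl _ · _) h

end Run

section LowerBound

variable {n k : ℕ} {F : Conf n → Conf n} {W : List (Finset (Fin n))} {h : Fin n → Fin (n + k)}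
  {W' : List (Finset (Fin (n + k)))} {F' : Conf (n + k) → Conf (n + k)}

lemma eq_of_confusable_of_runSched_eq (hW : isSchedule W) (hW' : isSchedule W')
    (hext : extendsSched W W' h) (hsim : simulates F' W' F h) {z z' : Conf (n + k)} {i : ℕ}
    (hconf : updSet F (prefUnion W i) (fun j => z (h j)) =
      updSet F (prefUnion W i) (fun j => z' (h j)))
    (hout : ∀ p ∉ Set.range h, z p = z' p)
    (hfin : ∀ p ∉ Set.range h, runSched F' W' z p = runSched F' W' z' p) :
    F (fun j => z (h j)) = F (fun j => z' (h j)) := by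
  obtain ⟨t, ht⟩ := exists_lt_iff_lt_of_le_iff_le hext i
  have hrun : runSched F' W' z = runSched F' W' z' := by
    refine runSched_eq_of_runPart_eq t (funext fun p => ?_)
    rw [runPart_apply_eq_ite hW', runPart_apply_eq_ite hW']
    by_cases hp : p ∈ Set.range h
    · obtain ⟨j, rfl⟩ := hp
      have hj := congrFun hconf j
      simp only [updSet_prefUnion_apply hW, ht j] at hj
      split_ifs at hj ⊢
      · exact (congrFun (hsim z) j).trans (hj.trans (congrFun (hsim z') j).symm)
      · exact hj
    · split_ifs
      exacts [hfin p hp, hout p hp]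
  rw [← hsim, ← hsim, hrun]

lemma colorable_of_simulates (hW : isSchedule W) (hinj : Function.Injective h)
    (hW' : isSchedule W') (hext : extendsSched W W' h) (hsim : simulates F' W' F h) :
    (gnecc F W).Colorable (2 ^ k) := by
  classical
  have hlift (x : Conf n) : (fun j => Function.extend h x (fun _ => false) (h j)) = x :=
    funext (hinj.extend_apply x _)
  let c : (gnecc F W).Coloring (↥(Set.range h)ᶜ → Bool) :=
    SimpleGraph.Coloring.mk
      (fun x p => runSched F' W' (Function.extend h x fun _ => false) p) fun {x x'} hadj hc => by
        obtain ⟨hne, i, -, hconf⟩ := hadj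
        refine hne ?_
        rw [← hlift x, ← hlift x'] at hconf
        simpa only [hlift] using eq_of_confusable_of_runSched_eq hW hW' hext hsim hconf
          (fun p hp => by rw [Function.extend_apply' _ _ _ hp, Function.extend_apply' _ _ _ hp])
          (fun p hp => congrFun hc ⟨p, hp⟩)
  have hcard : Fintype.card (↥(Set.range h)ᶜ → Bool) = 2 ^ k := by
    rw [Fintype.card_fun, Fintype.card_bool, Fintype.card_compl_set,
      Set.card_range_of_injective hinj]
    simp
  exact hcard ▸ c.colorable

end LowerBound

lemma isSchedule_seqSched (k : ℕ) : isSchedule (seqSched k) := by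
  refine ⟨by simp [seqSched], ?_, ?_⟩
  · exact List.pairwise_map.2 ((List.nodup_finRange k).imp Finset.disjoint_singleton.2)
  · ext i
    simp [mem_foldr_union, seqSched]

section UpperBound

variable {n k : ℕ} {F : Conf n → Conf n} {W : List (Finset (Fin n))} {E : List (Finset (Fin k))}

def appendSched (E : List (Finset (Fin k))) (W : List (Finset (Fin n))) :
    List (Finset (Fin (n + k))) :=
  E.map (·.map (Fin.natAddEmb n)) ++ W.map (·.map (Fin.castAddEmb k))

lemma isSchedule_appendSched (hE : isSchedule E) (hW : isSchedule W) :
    isSchedule (appendSched E W) := by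
  refine ⟨?_, ?_, ?_⟩
  · simp only [appendSched, List.mem_append, List.mem_map]
    rintro _ (⟨B, hB, rfl⟩ | ⟨B, hB, rfl⟩)
    exacts [(hE.1 B hB).map, (hW.1 B hB).map]
  · refine List.pairwise_append.2 ⟨?_, ?_, ?_⟩
    · exact List.pairwise_map.2 (hE.2.1.imp (Finset.disjoint_map _).2)
    · exact List.pairwise_map.2 (hW.2.1.imp (Finset.disjoint_map _).2)
    · simp only [List.mem_map]
      rintro _ ⟨A, -, rfl⟩ _ ⟨B, -, rfl⟩
      simp only [Finset.disjoint_left, Finset.mem_map]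
      rintro _ ⟨e, -, rfl⟩ ⟨j, -, hj⟩
      have := congrArg Fin.val hj
      simp only [Fin.coe_castAddEmb, Fin.val_castAdd, Fin.natAddEmb_apply, Fin.val_natAdd] at this
      omega
  · ext p
    simp only [mem_foldr_union, Finset.mem_univ, iff_true, appendSched, List.mem_append,
      List.mem_map]
    refine Fin.addCases (fun j => ?_) (fun e => ?_) p
    · obtain ⟨B, hB, hj⟩ := mem_foldr_union.1 (hW.2.2 ▸ Finset.mem_univ j)
      exact ⟨_, Or.inr ⟨B, hB, rfl⟩, Finset.mem_map_of_mem _ hj⟩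
    · obtain ⟨B, hB, he⟩ := mem_foldr_union.1 (hE.2.2 ▸ Finset.mem_univ e)
      exact ⟨_, Or.inl ⟨B, hB, rfl⟩, Finset.mem_map_of_mem _ he⟩

lemma stepOf_appendSched_natAdd (hE : isSchedule E) (hW : isSchedule W) (e : Fin k) :
    stepOf (appendSched E W) (Fin.natAdd n e) = stepOf E e := by
  have hlt := stepOf_lt_length hE e
  rw [stepOf_eq_iff_mem (isSchedule_appendSched hE hW) (by simp [appendSched]; omega)]
  simp [appendSched, hlt, mem_getElem_stepOf hE e]

lemma stepOf_appendSched_castAdd (hE : isSchedule E) (hW : isSchedule W) (j : Fin n) :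
    stepOf (appendSched E W) (Fin.castAdd k j) = E.length + stepOf W j := by
  have hlt := stepOf_lt_length hW j
  rw [stepOf_eq_iff_mem (isSchedule_appendSched hE hW) (by simp [appendSched]; omega)]
  simp [appendSched, mem_getElem_stepOf hW j]

lemma eq_of_coloring_eq_of_confusable {α : Type*} (C : (gnecc F W).Coloring α) {x x' : Conf n}
    (hc : C x = C x') (hconf : confusable F W x x') : F x = F x' :=
  by_contra fun hne => C.valid ⟨hne, hconf⟩ hc

noncomputable def simNet (F : Conf n → Conf n) (W : List (Finset (Fin n)))
    (C : (gnecc F W).Coloring (Conf k)) : Conf (n + k) → Conf (n + k) := fun y =>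
  Fin.addCases
    (fun j => if hx : ∃ x₀, C x₀ = (fun e => y (Fin.natAdd n e)) ∧
        updSet F (prefUnion W (stepOf W j)) x₀ = (fun j' => y (Fin.castAdd k j'))
      then F hx.choose j else false)
    (C fun j => y (Fin.castAdd k j))

lemma runSched_simNet_castAdd (hE : isSchedule E) (hW : isSchedule W)
    (C : (gnecc F W).Coloring (Conf k)) (z : Conf (n + k)) (j : Fin n) :
    runSched (simNet F W C) (appendSched E W) z (Fin.castAdd k j) =
      F (fun j' => z (Fin.castAdd k j')) j := by
  set x : Conf n := fun j' => z (Fin.castAdd k j')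
  have hW' := isSchedule_appendSched hE hW
  have hcolor (e : Fin k) :
      runSched (simNet F W C) (appendSched E W) z (Fin.natAdd n e) = C x e := by
    rw [runSched_apply hW', simNet, Fin.addCases_right]
    refine congrArg (fun y => C y e) (funext fun j' => ?_)
    rw [runPart_apply_eq_ite hW', if_neg]
    rw [stepOf_appendSched_castAdd hE hW, stepOf_appendSched_natAdd hE hW]
    have := stepOf_lt_length hE e
    omega
  induction hs : stepOf W j using Nat.strong_induction_on generalizing j with
  | _ s ih =>
    subst hs
    set y := runPart (simNet F W C) (appendSched E W) (E.length + stepOf W j) z with hy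
    have hstate : updSet F (prefUnion W (stepOf W j)) x = fun j' => y (Fin.castAdd k j') := by
      funext j'
      rw [updSet_prefUnion_apply hW, hy, runPart_apply_eq_ite hW', stepOf_appendSched_castAdd hE hW]
      simp only [Nat.add_lt_add_iff_left]
      split_ifs with hlt
      exacts [(ih _ hlt j' rfl).symm, rfl]
    have hstored : C x = fun e => y (Fin.natAdd n e) := by
      funext e
      rw [hy, runPart_apply_eq_ite hW', stepOf_appendSched_natAdd hE hW,
        if_pos ((stepOf_lt_length hE e).trans_le (Nat.le_add_right _ _)), hcolor]
    have hx : ∃ x₀, C x₀ = (fun e => y (Fin.natAdd n e)) ∧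
        updSet F (prefUnion W (stepOf W j)) x₀ = (fun j' => y (Fin.castAdd k j')) :=
      ⟨x, hstored, hstate⟩
    rw [runSched_apply hW', stepOf_appendSched_castAdd hE hW, simNet, Fin.addCases_left, dif_pos hx]
    obtain ⟨hC₀, hupd₀⟩ := hx.choose_spec
    have hconf : confusable F W hx.choose x :=
      ⟨stepOf W j, (stepOf_lt_length hW j).le, hupd₀.trans hstate.symm⟩
    rw [eq_of_coloring_eq_of_confusable C (hC₀.trans hstored.symm) hconf]

lemma exists_simulates_of_coloring (hW : isSchedule W) (C : (gnecc F W).Coloring (Conf k)) :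
    ∃ h : Fin n → Fin (n + k), Function.Injective h ∧
      ∃ W' : List (Finset (Fin (n + k))), isSchedule W' ∧ extendsSched W W' h ∧
        ∃ F' : Conf (n + k) → Conf (n + k), simulates F' W' F h := by
  have hE := isSchedule_seqSched k
  refine ⟨Fin.castAdd k, Fin.castAdd_injective n k, appendSched (seqSched k) W,
    isSchedule_appendSched hE hW, fun i i' => ?_, simNet F W C,
    fun z => funext (runSched_simNet_castAdd hE hW C z)⟩
  rw [stepOf_appendSched_castAdd hE hW, stepOf_appendSched_castAdd hE hW, Nat.add_le_add_iff_left]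

end UpperBound

lemma exists_simulates_iff_colorable {n : ℕ} {F : Conf n → Conf n} {W : List (Finset (Fin n))}
    (hW : isSchedule W) (k : ℕ) :
    (∃ h : Fin n → Fin (n + k), Function.Injective h ∧
      ∃ W' : List (Finset (Fin (n + k))), isSchedule W' ∧ extendsSched W W' h ∧
        ∃ F' : Conf (n + k) → Conf (n + k), simulates F' W' F h) ↔
      (gnecc F W).Colorable (2 ^ k) :=
  ⟨fun ⟨_, hinj, _, hW', hext, _, hsim⟩ => colorable_of_simulates hW hinj hW' hext hsim,
    fun hcol => exists_simulates_of_coloring hW (hcol.toColoring (by simp))⟩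

lemma SimpleGraph.sInf_colorable_two_pow {V : Type*} [Finite V] (G : SimpleGraph V) :
    sInf {k | G.Colorable (2 ^ k)} = Nat.clog 2 G.chromaticNumber.toNat := by
  have hset : {k | G.Colorable (2 ^ k)} = Set.Ici (Nat.clog 2 G.chromaticNumber.toNat) := by
    ext k
    rw [Set.mem_Ici, Nat.clog_le_iff_le_pow one_lt_two, Set.mem_ofPred_eq]
    refine ⟨fun hcol => ?_, G.colorable_chromaticNumber_of_fintype.mono⟩
    exact (ENat.toNat_le_toNat hcol.chromaticNumber_le (ENat.natCast_ne_top _)).trans_eq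
      (ENat.toNat_natCast _)
  rw [hset, csInf_Ici]

theorem stmt2 {n : ℕ} (F : Conf n → Conf n) (W : List (Finset (Fin n)))
    (hW : isSchedule W) :
    kappa F W = Nat.clog 2 ((gnecc F W).chromaticNumber.toNat) := by
  rw [kappa]
  simp_rw [exists_simulates_iff_colorable hW]
  exact (gnecc F W).sInf_colorable_two_pow
end

section
/- Let n be even and define F: B^n → B^n by f_i(x) = x_{i+n/2} for i < n/2 and f_i(x) = x_{i-n/2} for i ≥ n/2, with the sequential update schedule W = ({0},{1},...,{n-1}). Then the set X = {x ∈ B^n : x_i = 0 for all i ≥ n/2} is a clique of size 2^{n/2} in the graph G_NECC(F,W). -/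
/-- The swap network: automata `i` and `i + n/2` exchange their values. -/
def swapF (n : ℕ) (hn : Even n) : Conf n → Conf n :=
  fun x i =>
    if h : (i : ℕ) < n / 2 then
      x ⟨(i : ℕ) + n / 2, by have h2 := Nat.even_iff.mp hn; omega⟩
    else
      x ⟨(i : ℕ) - n / 2, by have := i.isLt; omega⟩

/-! `swapF` is an involution, hence injective, so distinct configurations have distinct images.
A configuration vanishing on the upper half becomes the zero configuration once the lower half has
been updated, since each cell `i < n/2` copies the zero of cell `i + n/2`; hence any two such
configurations are confusable at step `n/2`. They are determined by their free lower half, so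
there are `2 ^ (n/2)` of them. -/

open Finset

theorem Finset.card_filter_forall_imp_eq_false {α : Type*} [Fintype α] [DecidableEq α]
    (p : α → Prop) [DecidablePred p] :
    #{x : α → Bool | ∀ i, p i → x i = false} = 2 ^ #{i | ¬ p i} := by
  have hpi : ({x : α → Bool | ∀ i, p i → x i = false} : Finset (α → Bool)) =
      Fintype.piFinset fun i => if p i then {false} else univ := by
    ext x
    simp only [mem_filter, mem_univ, true_and, Fintype.mem_piFinset]
    refine forall_congr' fun i => ?_
    split_ifs <;> simp_all
  rw [hpi, Fintype.card_piFinset]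
  simp only [apply_ite Finset.card, card_singleton, card_univ, Fintype.card_bool]
  rw [prod_ite, prod_const_one, one_mul, prod_const]

lemma List.mem_foldr_union_empty {α : Type*} [DecidableEq α] (L : List (Finset α)) (a : α) :
    a ∈ L.foldr (· ∪ ·) ∅ ↔ ∃ s ∈ L, a ∈ s := by
  induction L with
  | nil => simp
  | cons s L ih => simp [ih]

lemma mem_prefUnion_seqSched {n j : ℕ} (i : Fin n) :
    i ∈ prefUnion (seqSched n) j ↔ (i : ℕ) < j := by
  simp only [prefUnion, seqSched, ← List.map_take, List.mem_foldr_union_empty, List.mem_iff_getElem,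
    List.getElem_map, List.getElem_take, List.getElem_finRange, Fin.cast_mk, List.length_map,
    List.length_take, List.length_finRange, lt_inf_iff, existsAndEq, mem_singleton, true_and]
  constructor
  · rintro ⟨k, ⟨hk, -⟩, rfl⟩
    exact hk
  · exact fun h => ⟨i, ⟨h, i.isLt⟩, rfl⟩

lemma length_seqSched (n : ℕ) : (seqSched n).length = n := by
  simp [seqSched]

section swapF

variable {n : ℕ} (hn : Even n)

lemma swapF_apply_of_lt (x : Conf n) {i : Fin n} (hi : (i : ℕ) < n / 2) :
    swapF n hn x i = x ⟨i + n / 2, by grind⟩ := by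
  simp [swapF, hi]

lemma swapF_apply_of_le (x : Conf n) {i : Fin n} (hi : n / 2 ≤ (i : ℕ)) :
    swapF n hn x i = x ⟨i - n / 2, by omega⟩ := by
  simp [swapF, Nat.not_lt.mpr hi]

lemma swapF_swapF (x : Conf n) : swapF n hn (swapF n hn x) = x := by
  have h2 := Nat.even_iff.mp hn
  funext i
  by_cases hi : (i : ℕ) < n / 2
  · rw [swapF_apply_of_lt hn _ hi, swapF_apply_of_le hn _ (by simp)]
    simp
  · rw [swapF_apply_of_le hn _ (by omega), swapF_apply_of_lt hn _ (by simp; omega)]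
    congr 1
    ext
    exact Nat.sub_add_cancel (by omega)

lemma swapF_injective : Function.Injective (swapF n hn) :=
  Function.LeftInverse.injective (swapF_swapF hn)

lemma updSet_swapF_half_eq_false {x : Conf n} (hx : ∀ i : Fin n, n / 2 ≤ (i : ℕ) → x i = false) :
    updSet (swapF n hn) (prefUnion (seqSched n) (n / 2)) x = fun _ => false := by
  funext i
  by_cases hi : (i : ℕ) < n / 2
  · rw [updSet, if_pos ((mem_prefUnion_seqSched i).mpr hi), swapF_apply_of_lt hn _ hi]
    exact hx _ (by simp)
  · rw [updSet, if_neg (mt (mem_prefUnion_seqSched i).mp hi)]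
    exact hx i (by omega)

end swapF

theorem stmt3 {n : ℕ} (hn : Even n) :
    (gnecc (swapF n hn) (seqSched n)).IsNClique (2 ^ (n / 2))
      (Finset.univ.filter
        (fun x : Conf n => ∀ i : Fin n, n / 2 ≤ (i : ℕ) → x i = false)) := by
  refine ⟨fun x hx x' hx' hne => ⟨(swapF_injective hn).ne hne, n / 2, ?_, ?_⟩, ?_⟩
  · exact (length_seqSched n).symm ▸ Nat.div_le_self n 2
  · simp only [Finset.coe_filter, Finset.mem_univ, true_and, Set.mem_ofPred_eq] at hx hx'
    rw [updSet_swapF_half_eq_false hn hx, updSet_swapF_half_eq_false hn hx']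
  · convert Finset.card_filter_forall_imp_eq_false (fun i : Fin n => n / 2 ≤ (i : ℕ)) using 3
    -- `using 3` reconciles the statement's `Nat.decidableForallFin` instance with the lemma's.
    simp only [not_le, Fin.card_filter_val_lt]
    omega
end

section
/- For a BAN F and block-sequential update schedule W with p blocks, for any pair of configurations x, x' that are confusable, the set CC(x,x') = {i ∈ [0,p] : F_{W_{<i}}(x) = F_{W_{<i}}(x')} is an integer interval; i.e., if a = min CC(x,x') and b = max CC(x,x'), then CC(x,x') = [a, b]. -/
/-! Since `W_{<i}` grows with `i`, the configurations `F_J(x)` and `F_J(x')` for `I ⊆ J ⊆ K` agree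
with `F_K(x), F_K(x')` on `J` and with `F_I(x), F_I(x')` off `J`; hence agreement at two steps
propagates to every step in between. -/

section

variable {n : ℕ}

theorem mem_prefUnion {W : List (Finset (Fin n))} {j : ℕ} {a : Fin n} :
    a ∈ prefUnion W j ↔ ∃ B ∈ W.take j, a ∈ B := by
  rw [prefUnion, show (· ∪ ·) = ((· ⊔ ·) : Finset (Fin n) → _ → _) from rfl,
    show (∅ : Finset (Fin n)) = ⊥ from rfl, List.foldr_sup_eq_sup_toFinset]
  simp

theorem prefUnion_mono (W : List (Finset (Fin n))) : Monotone (prefUnion W) :=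
  fun _ _ hij _ ha =>
    let ⟨B, hB, haB⟩ := mem_prefUnion.mp ha
    mem_prefUnion.mpr ⟨B, (List.take_sublist_take_left hij).subset hB, haB⟩

theorem updSet_eq_of_subset {F : Conf n → Conf n} {I J K : Finset (Fin n)} {x x' : Conf n}
    (hIJ : I ⊆ J) (hJK : J ⊆ K) (hI : updSet F I x = updSet F I x')
    (hK : updSet F K x = updSet F K x') : updSet F J x = updSet F J x' := by
  funext k
  by_cases hk : k ∈ J
  · simpa [updSet, hk, hJK hk] using congrFun hK k
  · simpa [updSet, hk, mt (@hIJ k) hk] using congrFun hI k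

theorem ordConnected_CCset (F : Conf n → Conf n) (W : List (Finset (Fin n))) (x x' : Conf n) :
    (CCset F W x x').OrdConnected :=
  ⟨fun _ hi _ hk _ ⟨hij, hjk⟩ =>
    ⟨hjk.trans hk.1, updSet_eq_of_subset (prefUnion_mono W hij) (prefUnion_mono W hjk) hi.2 hk.2⟩⟩

end

theorem stmt9_general {n : ℕ} (F : Conf n → Conf n) (W : List (Finset (Fin n)))
    (x x' : Conf n) (h : (CCset F W x x').Nonempty) :
    CCset F W x x' = Set.Icc (sInf (CCset F W x x')) (sSup (CCset F W x x')) :=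
  (h.ordConnected_iff_of_bdd (OrderBot.bddBelow _) ⟨W.length, fun _ hi => hi.1⟩).mp
    (ordConnected_CCset F W x x')

theorem stmt9 {n : ℕ} (F : Conf n → Conf n) (W : List (Finset (Fin n)))
    (hW : isSchedule W) (x x' : Conf n) (h : (CCset F W x x').Nonempty) :
    CCset F W x x' = Set.Icc (sInf (CCset F W x x')) (sSup (CCset F W x x')) :=
  stmt9_general F W x x' h
end
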